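/- A set S ⊆ ℕ^ℕ is Δ⁰₂ (both Σ⁰₂ and Π⁰₂ in Baire space) if and only if S_∞ = ∅. -/

import Mathlib

open Ordinal Filter Topology

/-- The first `n` values of `f` as a finite sequence. -/
def seg (f : ℕ → ℕ) (n : ℕ) : List ℕ := (List.range n).map f

/-- `[X]`: the set of infinite sequences all of whose initial segments lie in `X`. -/
def ext (X : Set (List ℕ)) : Set (ℕ → ℕ) := {f | ∀ n, seg f n ∈ X}

/-- `σ` is an initial segment of `f`. -/
def isInit (σ : List ℕ) (f : ℕ → ℕ) : Prop := seg f σ.length = σ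

/-- One step of the derivative process relative to `S`. -/
def derivStep (S : Set (ℕ → ℕ)) (X : Set (List ℕ)) : Set (List ℕ) :=
  {x ∈ X | ∃ f g : ℕ → ℕ, f ∈ ext X ∧ g ∈ ext X ∧ isInit x f ∧ isInit x g ∧ f ∈ S ∧ g ∉ S}

/-- The transfinite sequence `S_α`. -/
noncomputable def dSeq (S : Set (ℕ → ℕ)) (α : Ordinal.{0}) : Set (List ℕ) :=
  Ordinal.limitRecOn α Set.univ (fun _ X => derivStep S X)
    (fun o _ ih => ⋂ (β : Set.Iio o), ih β.1 β.2)

/-- `α(S)`: the least ordinal where the process stabilizes. -/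
noncomputable def kernelOrd (S : Set (ℕ → ℕ)) : Ordinal.{0} :=
  sInf {α | dSeq S α = dSeq S (α + 1)}

/-- `S_∞`, the kernel. -/
noncomputable def kernel (S : Set (ℕ → ℕ)) : Set (List ℕ) := dSeq S (kernelOrd S)

/-- `β(σ)`: the least ordinal `α` with `σ ∉ S_α`. -/
noncomputable def bOrd (S : Set (ℕ → ℕ)) (σ : List ℕ) : Ordinal.{0} :=
  sInf {α | σ ∉ dSeq S α}

open Classical in
/-- `S` is guessable. -/
def Guessable (S : Set (ℕ → ℕ)) : Prop :=
  ∃ G : List ℕ → ℕ, ∀ f : ℕ → ℕ,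
    Tendsto (fun n => G (seg f n)) atTop (𝓝 (if f ∈ S then 1 else 0))

/-- `Δ⁰₂`: both a countable union of closed sets and a countable intersection of open sets. -/
def IsDelta02 (S : Set (ℕ → ℕ)) : Prop :=
  (∃ F : ℕ → Set (ℕ → ℕ), (∀ n, IsClosed (F n)) ∧ S = ⋃ n, F n) ∧
  (∃ U : ℕ → Set (ℕ → ℕ), (∀ n, IsOpen (U n)) ∧ S = ⋂ n, U n)



/-! If `S` is Δ⁰₂ but the kernel `T = S_∞` is nonempty, then `T` is a fixed point of the
derivative, so inside the closed set `[T]` both `S` and its complement are dense. As `S` is both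
a countable union of closed sets and a countable intersection of open sets, Baire category in the
Polish space `[T]` gives one of them nonempty interior there, a contradiction.

Conversely, if the kernel is empty, every node `σ` leaves the sequence at a successor stage
`β(σ) = γ + 1`. Along any `f` the ordinals `β(f↾n)` decrease, so they are eventually constant,
say `γ + 1`; then `f ∈ [S_γ]`, and for large `n` the node `f↾n` has an extension in `S ∩ [S_γ]`
exactly when `f ∈ S` (otherwise `f↾n` would survive into `S_{γ+1}`). This guesses `S` in the
limit, and a set that is the pointwise limit of clopen sets is Δ⁰₂. -/

open PiNat

lemma seg_length (f : ℕ → ℕ) (n : ℕ) : (seg f n).length = n := by simp [seg]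

lemma seg_eq_seg_iff_mem_cylinder {f g : ℕ → ℕ} {n : ℕ} :
    seg g n = seg f n ↔ g ∈ cylinder f n := by
  simp [seg, List.map_inj_left, mem_cylinder_iff]

lemma isInit_seg_iff_mem_cylinder {f g : ℕ → ℕ} {n : ℕ} :
    isInit (seg f n) g ↔ g ∈ cylinder f n := by
  rw [isInit, seg_length, seg_eq_seg_iff_mem_cylinder]

lemma isInit_seg (f : ℕ → ℕ) (n : ℕ) : isInit (seg f n) f :=
  isInit_seg_iff_mem_cylinder.2 (self_mem_cylinder f n)

lemma seg_eq_ofFn (f : ℕ → ℕ) (n : ℕ) : seg f n = List.ofFn fun i : Fin n => f i :=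
  List.ext_getElem (by simp [seg]) (by simp [seg])

lemma continuous_seg (n : ℕ) : Continuous (seg · n) := by
  simp_rw [seg_eq_ofFn]
  exact (continuous_of_discreteTopology (f := fun v : Fin n → ℕ => List.ofFn v)).comp
    (continuous_pi fun i => continuous_apply (i : ℕ))

lemma isClopen_seg_preimage (A : Set (List ℕ)) (n : ℕ) : IsClopen ((seg · n) ⁻¹' A) :=
  (isClopen_discrete A).preimage (continuous_seg n)

lemma isClosed_ext (T : Set (List ℕ)) : IsClosed (ext T) := by
  have : ext T = ⋂ n, (seg · n) ⁻¹' T := by ext; simp [ext]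
  exact this ▸ isClosed_iInter fun n => (isClopen_seg_preimage T n).isClosed

lemma exists_cylinder_subset_of_mem_nhds {u : Set (ℕ → ℕ)} {x : ℕ → ℕ} (hu : u ∈ 𝓝 x) :
    ∃ n, cylinder x n ⊆ u := by
  obtain ⟨-, ⟨y, n, rfl⟩, hx, hyu⟩ := (isTopologicalBasis_cylinders fun _ => ℕ).mem_nhds_iff.1 hu
  exact ⟨n, mem_cylinder_iff_eq.1 hx ▸ hyu⟩

theorem BaireSpace.exists_mem_nhds_or_compl_mem_nhds {X : Type*} [TopologicalSpace X]
    [BaireSpace X] [Nonempty X] {s : Set X} {F U : ℕ → Set X} (hF : ∀ n, IsClosed (F n))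
    (hsF : s = ⋃ n, F n) (hU : ∀ n, IsOpen (U n)) (hsU : s = ⋂ n, U n) :
    ∃ x, s ∈ 𝓝 x ∨ sᶜ ∈ 𝓝 x := by
  have hcover : ⋃ i, Sum.elim F (fun n => (U n)ᶜ) i = Set.univ := by
    simp only [Set.iUnion_sum, Sum.elim_inl, Sum.elim_inr]
    rw [← Set.compl_iInter, ← hsF, ← hsU, Set.union_compl_self]
  obtain ⟨i | i, x, hx⟩ := nonempty_interior_of_iUnion_of_closed
    (by rintro (i | i); exacts [hF i, (hU i).isClosed_compl]) hcover
  · exact ⟨x, .inl (mem_of_superset (mem_interior_iff_mem_nhds.1 hx) (hsF ▸ Set.subset_iUnion F i))⟩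
  · exact ⟨x, .inr (mem_of_superset (mem_interior_iff_mem_nhds.1 hx)
      (Set.compl_subset_compl.2 (hsU ▸ Set.iInter_subset U i)))⟩

lemma derivStep_compl (S : Set (ℕ → ℕ)) (X : Set (List ℕ)) : derivStep Sᶜ X = derivStep S X := by
  ext x
  constructor <;> rintro ⟨hx, f, g, hf, hg, hif, hig, hfS, hgS⟩
  · exact ⟨hx, g, f, hg, hf, hig, hif, not_not.1 hgS, hfS⟩
  · exact ⟨hx, g, f, hg, hf, hig, hif, hgS, not_not.2 hfS⟩

lemma preimage_notMem_nhds_of_subset_derivStep {S : Set (ℕ → ℕ)} {T : Set (List ℕ)}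
    (hT : T ⊆ derivStep S T) (x : ext T) : Subtype.val ⁻¹' S ∉ 𝓝 x := by
  intro hx
  obtain ⟨u, hu, huS⟩ := (mem_nhds_subtype _ x _).1 hx
  obtain ⟨n, hn⟩ := exists_cylinder_subset_of_mem_nhds hu
  obtain ⟨-, -, g, -, hg, -, hig, -, hgS⟩ := hT (x.2 n)
  exact hgS (@huS ⟨g, hg⟩ (hn (isInit_seg_iff_mem_cylinder.1 hig)))

lemma not_isDelta02_of_subset_derivStep {S : Set (ℕ → ℕ)} {T : Set (List ℕ)}
    (hT : T ⊆ derivStep S T) (hne : T.Nonempty) : ¬ IsDelta02 S := by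
  rintro ⟨⟨F, hF, hSF⟩, U, hU, hSU⟩
  obtain ⟨σ, hσ⟩ := hne
  obtain ⟨-, f, -, hf, -⟩ := hT hσ
  have : Nonempty ↥(ext T) := ⟨f, hf⟩
  have := (isClosed_ext T).polishSpace
  obtain ⟨x, hx | hx⟩ := BaireSpace.exists_mem_nhds_or_compl_mem_nhds
    (s := (Subtype.val : ext T → ℕ → ℕ) ⁻¹' S)
    (fun n => (hF n).preimage continuous_subtype_val) (by rw [hSF, Set.preimage_iUnion])
    (fun n => (hU n).preimage continuous_subtype_val) (by rw [hSU, Set.preimage_iInter])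
  · exact preimage_notMem_nhds_of_subset_derivStep hT x hx
  · exact preimage_notMem_nhds_of_subset_derivStep (S := Sᶜ) (by rwa [derivStep_compl]) x hx

lemma dSeq_zero (S : Set (ℕ → ℕ)) : dSeq S 0 = Set.univ :=
  Ordinal.limitRecOn_zero _ _ _

lemma dSeq_add_one (S : Set (ℕ → ℕ)) (α : Ordinal) :
    dSeq S (α + 1) = derivStep S (dSeq S α) :=
  Ordinal.limitRecOn_add_one _ _ _ _

lemma mem_dSeq_iff_of_isSuccLimit {S : Set (ℕ → ℕ)} {o : Ordinal} (ho : Order.IsSuccLimit o)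
    {σ : List ℕ} : σ ∈ dSeq S o ↔ ∀ β < o, σ ∈ dSeq S β := by
  have : dSeq S o = ⋂ β : Set.Iio o, dSeq S β := Ordinal.limitRecOn_limit _ _ _ _ ho
  simp [this]

lemma mem_dSeq_of_isSuccPrelimit {S : Set (ℕ → ℕ)} {o : Ordinal} (ho : Order.IsSuccPrelimit o)
    {σ : List ℕ} (h : ∀ β < o, σ ∈ dSeq S β) : σ ∈ dSeq S o := by
  rcases eq_or_ne o 0 with rfl | h0
  · simp [dSeq_zero]
  · exact (mem_dSeq_iff_of_isSuccLimit (.mk (by simpa using h0) ho)).2 h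

lemma dSeq_antitone (S : Set (ℕ → ℕ)) : Antitone (dSeq S) := by
  intro α β hαβ
  induction β using Ordinal.limitRecOn with
  | zero => rw [nonpos_iff_eq_zero.1 hαβ]
  | add_one β ih =>
    rcases hαβ.lt_or_eq with h | rfl
    · rw [dSeq_add_one]
      exact (Set.sep_subset _ _).trans (ih (Order.lt_add_one_iff.1 h))
    · rfl
  | limit o ho ih =>
    rcases hαβ.lt_or_eq with h | rfl
    · exact fun σ hσ => (mem_dSeq_iff_of_isSuccLimit ho).1 hσ α h
    · rfl

lemma seg_mem_derivStep_of_le {S : Set (ℕ → ℕ)} {X : Set (List ℕ)} {f : ℕ → ℕ} {k n : ℕ}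
    (hkn : k ≤ n) (h : seg f n ∈ derivStep S X) : seg f k ∈ derivStep S X := by
  obtain ⟨-, g, g', hg, hg', hig, hig', hgS, hg'S⟩ := h
  rw [isInit_seg_iff_mem_cylinder] at hig hig'
  have hcyl := cylinder_anti f hkn
  refine ⟨seg_eq_seg_iff_mem_cylinder.2 (hcyl hig) ▸ hg k, g, g', hg, hg', ?_, ?_, hgS, hg'S⟩ <;>
    rw [isInit_seg_iff_mem_cylinder]
  exacts [hcyl hig, hcyl hig']

lemma seg_mem_dSeq_of_le (S : Set (ℕ → ℕ)) (α : Ordinal) {f : ℕ → ℕ} {k n : ℕ} (hkn : k ≤ n) :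
    seg f n ∈ dSeq S α → seg f k ∈ dSeq S α := by
  induction α using Ordinal.limitRecOn with
  | zero => simp [dSeq_zero]
  | add_one α _ => rw [dSeq_add_one]; exact seg_mem_derivStep_of_le hkn
  | limit o ho ih =>
    simp only [mem_dSeq_iff_of_isSuccLimit ho]
    exact fun h β hβ => ih β hβ (h β hβ)

lemma exists_dSeq_eq_dSeq_add_one (S : Set (ℕ → ℕ)) : ∃ α, dSeq S α = dSeq S (α + 1) := by
  by_contra! h
  have : StrictAnti (dSeq S) := fun a b hab =>
    (dSeq_antitone S (Order.add_one_le_of_lt hab)).trans_lt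
      ((dSeq_antitone S le_self_add).lt_of_ne (h a).symm)
  exact not_injective_of_ordinal _ this.injective

lemma derivStep_kernel (S : Set (ℕ → ℕ)) : derivStep S (kernel S) = kernel S := by
  rw [kernel, ← dSeq_add_one]
  exact (csInf_mem (exists_dSeq_eq_dSeq_add_one S)).symm

section bOrd

variable {S : Set (ℕ → ℕ)} {σ : List ℕ}

lemma mem_dSeq_of_lt_bOrd {α : Ordinal} (h : α < bOrd S σ) : σ ∈ dSeq S α :=
  not_not.1 (notMem_of_lt_csInf' h)

lemma notMem_dSeq_bOrd (h : ∃ α, σ ∉ dSeq S α) : σ ∉ dSeq S (bOrd S σ) := csInf_mem h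

lemma bOrd_le {α : Ordinal} (h : σ ∉ dSeq S α) : bOrd S σ ≤ α := csInf_le' h

lemma not_isSuccPrelimit_bOrd (h : ∃ α, σ ∉ dSeq S α) : ¬ Order.IsSuccPrelimit (bOrd S σ) :=
  fun hb => notMem_dSeq_bOrd h (mem_dSeq_of_isSuccPrelimit hb fun _ => mem_dSeq_of_lt_bOrd)

lemma mem_dSeq_pred_bOrd (h : ∃ α, σ ∉ dSeq S α) : σ ∈ dSeq S (bOrd S σ).pred :=
  mem_dSeq_of_lt_bOrd (Ordinal.pred_lt_iff_not_isSuccPrelimit.2 (not_isSuccPrelimit_bOrd h))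

lemma notMem_derivStep_dSeq_pred_bOrd (h : ∃ α, σ ∉ dSeq S α) :
    σ ∉ derivStep S (dSeq S (bOrd S σ).pred) := by
  rw [← dSeq_add_one, ← Order.succ_eq_add_one,
    Ordinal.succ_pred_eq_iff_not_isSuccPrelimit.2 (not_isSuccPrelimit_bOrd h)]
  exact notMem_dSeq_bOrd h

lemma antitone_bOrd_seg (hS : ∀ τ : List ℕ, ∃ α, τ ∉ dSeq S α) (f : ℕ → ℕ) :
    Antitone fun n => bOrd S (seg f n) := fun _ _ hkn =>
  bOrd_le fun h => notMem_dSeq_bOrd (hS _) (seg_mem_dSeq_of_le S _ hkn h)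

end bOrd

def guessSet (S : Set (ℕ → ℕ)) : Set (List ℕ) :=
  {σ | ∃ g ∈ S, g ∈ ext (dSeq S (bOrd S σ).pred) ∧ isInit σ g}

lemma eventually_seg_mem_guessSet_iff {S : Set (ℕ → ℕ)} (hS : ∀ σ : List ℕ, ∃ α, σ ∉ dSeq S α)
    (f : ℕ → ℕ) : ∀ᶠ n in atTop, seg f n ∈ guessSet S ↔ f ∈ S := by
  obtain ⟨m, hm⟩ := WellFoundedLT.antitone_chain_condition (antitone_bOrd_seg hS f)
  set γ := (bOrd S (seg f m)).pred
  have hfγ : f ∈ ext (dSeq S γ) := fun k => by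
    have := mem_dSeq_pred_bOrd (hS (seg f (max k m)))
    rw [← hm _ (le_max_right k m)] at this
    exact seg_mem_dSeq_of_le S γ (le_max_left k m) this
  filter_upwards [eventually_ge_atTop m] with n hn
  have hγ : (bOrd S (seg f n)).pred = γ := by rw [← hm n hn]
  simp only [guessSet, Set.mem_ofPred_eq, hγ]
  refine ⟨fun ⟨g, hgS, hg, hig⟩ => ?_, fun hfS => ⟨f, hfS, hfγ, isInit_seg f n⟩⟩
  by_contra hfS
  exact notMem_derivStep_dSeq_pred_bOrd (hS (seg f n))
    (hγ ▸ ⟨hfγ n, g, f, hg, hfγ, hig, isInit_seg f n, hgS, hfS⟩)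

open Classical in
lemma guessable_of_kernel_eq_empty {S : Set (ℕ → ℕ)} (h : kernel S = ∅) : Guessable S := by
  have hS : ∀ σ : List ℕ, ∃ α, σ ∉ dSeq S α :=
    fun σ => ⟨kernelOrd S, show σ ∉ kernel S by simp [h]⟩
  refine ⟨fun σ => if σ ∈ guessSet S then 1 else 0, fun f => tendsto_const_nhds.congr' ?_⟩
  filter_upwards [eventually_seg_mem_guessSet_iff hS f] with n hn
  simp only [hn]

lemma isDelta02_of_eventually_mem_iff {S : Set (ℕ → ℕ)} {A : ℕ → Set (ℕ → ℕ)}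
    (hA : ∀ n, IsClopen (A n)) (h : ∀ f, ∀ᶠ n in atTop, f ∈ A n ↔ f ∈ S) : IsDelta02 S := by
  have hev (f) : f ∈ S ↔ ∀ᶠ n in atTop, f ∈ A n :=
    ((eventually_congr (h f)).trans eventually_const).symm
  have hfr (f) : f ∈ S ↔ ∃ᶠ n in atTop, f ∈ A n :=
    ((frequently_congr (h f)).trans frequently_const).symm
  refine ⟨⟨fun m => ⋂ n ≥ m, A n, fun m => isClosed_biInter fun n _ => (hA n).isClosed, ?_⟩,
    ⟨fun m => ⋃ n ≥ m, A n, fun m => isOpen_biUnion fun n _ => (hA n).isOpen, ?_⟩⟩ <;>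
  ext f
  · simp only [Set.mem_iUnion, Set.mem_iInter, hev f, eventually_atTop]
  · simp only [Set.mem_iUnion, Set.mem_iInter, hfr f, frequently_atTop, exists_prop]

lemma Guessable.isDelta02 {S : Set (ℕ → ℕ)} (hS : Guessable S) : IsDelta02 S := by
  obtain ⟨G, hG⟩ := hS
  refine isDelta02_of_eventually_mem_iff (A := fun n => (seg · n) ⁻¹' {σ | G σ = 1})
    (fun n => isClopen_seg_preimage _ n) fun f => ?_
  filter_upwards [tendsto_pure.1 (nhds_discrete ℕ ▸ hG f)] with n hn
  by_cases hf : f ∈ S <;> simp [hf, hn]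

theorem stmt9 (S : Set (ℕ → ℕ)) : IsDelta02 S ↔ kernel S = ∅ := by
  refine ⟨fun hS => ?_, fun h => (guessable_of_kernel_eq_empty h).isDelta02⟩
  by_contra hne
  exact not_isDelta02_of_subset_derivStep (derivStep_kernel S).ge
    (Set.nonempty_iff_ne_empty.2 hne) hS
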